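/- An unbalanced even cycle in a signed graph is not 2-choosable; more precisely, if (C,σ) is a signed cycle of even length with an odd number of negative edges, then there exists an assignment of 2-element lists of integers to its vertices admitting no proper coloring. In particular, for the 4-cycle with exactly one negative edge, the constant list assignment L(v) = {7,−7} for all four vertices admits no proper coloring. -/
import Mathlib


open Classical in
/-- A signature on a graph: symmetric, and ±1 on edges. -/
def IsSign {V : Type*} (G : SimpleGraph V) (σ : V → V → ℤ) : Prop :=
  (∀ u v, σ u v = σ v u) ∧ ∀ u v, G.Adj u v → σ u v = 1 ∨ σ u v = -1

/-- A proper coloring of the signed graph `(G, σ)`. -/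
def IsProperCol {V : Type*} (G : SimpleGraph V) (σ : V → V → ℤ) (c : V → ℤ) : Prop :=
  ∀ u v, G.Adj u v → c u ≠ σ u v * c v

/-- `(G, σ)` is `k`-choosable. -/
def Choosable {V : Type*} (G : SimpleGraph V) (σ : V → V → ℤ) (k : ℕ) : Prop :=
  ∀ L : V → Finset ℤ, (∀ v, (L v).card = k) →
    ∃ c : V → ℤ, IsProperCol G σ c ∧ ∀ v, c v ∈ L v

open Classical in
/-- The signature obtained from `σ` by a switch at the vertex set `X`. -/
noncomputable def switchSign {V : Type*} (σ : V → V → ℤ) (X : Set V) : V → V → ℤ :=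
  fun u v => if (u ∈ X ↔ v ∈ X) then σ u v else - σ u v

open SimpleGraph Finset in
lemma key_unbalanced (m : ℕ) (σ : Fin (m + 3) → Fin (m + 3) → ℤ)
    (he : Even (m + 3))
    (hsym : ∀ u v, σ u v = σ v u)
    (hpm : ∀ u v : Fin (m+3), (cycleGraph (m + 3)).Adj u v → σ u v = 1 ∨ σ u v = -1)
    (ho : Odd (Finset.univ.filter (fun i : Fin (m + 3) => σ i (i + 1) = -1)).card) :
    ¬ ∃ c : Fin (m + 3) → ℤ,
        IsProperCol (cycleGraph (m + 3)) σ c ∧ ∀ v, c v ∈ ({7, -7} : Finset ℤ) := by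
  rintro ⟨c, hc, hL⟩
  have hadj : ∀ i : Fin (m+3), (cycleGraph (m+3)).Adj i (i+1) := by
    intro i
    have : (m + 3 : ℕ) = (m + 1) + 2 := by ring
    rw [this] at *
    rw [cycleGraph_adj]
    right; simp
  have hmem : ∀ v, c v = 7 ∨ c v = -7 := by
    intro v
    have := hL v
    simp [Finset.mem_insert, Finset.mem_singleton] at this
    tauto
  have hstep : ∀ i : Fin (m+3), c (i+1) = - σ i (i+1) * c i := by
    intro i
    have h1 := hc i (i+1) (hadj i)
    rcases hpm i (i+1) (hadj i) with h | h <;>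
      rcases hmem i with h3 | h3 <;> rcases hmem (i+1) with h4 | h4 <;>
      simp only [h, h3, h4] at h1 ⊢ <;> omega
  have hprod1 : ∏ i : Fin (m+3), c (i+1) = ∏ i, c i :=
    Fintype.prod_equiv (Equiv.addRight 1) _ _ (fun i => rfl)
  have hprod2 : ∏ i : Fin (m+3), c (i+1) = (∏ i : Fin (m+3), -σ i (i+1)) * ∏ i, c i := by
    rw [← Finset.prod_mul_distrib]
    exact Finset.prod_congr rfl (fun i _ => hstep i)
  have hne : (∏ i, c i) ≠ 0 := by
    rw [Finset.prod_ne_zero_iff]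
    intro i _
    rcases hmem i with h | h <;> omega
  have hP1 : (∏ i : Fin (m+3), -σ i (i+1)) = 1 := by
    have h := hprod1.symm.trans hprod2
    have : ((∏ i : Fin (m+3), -σ i (i+1)) - 1) * ∏ i, c i = 0 := by linarith
    rcases mul_eq_zero.mp this with h' | h'
    · linarith
    · exact absurd h' hne
  have hsig : ∀ i : Fin (m+3), σ i (i+1) = if σ i (i+1) = -1 then (-1 : ℤ) else 1 := by
    intro i
    rcases hpm i (i+1) (hadj i) with h | h <;> simp [h]
  have hPS : (∏ i : Fin (m+3), σ i (i+1)) = -1 := by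
    calc ∏ i : Fin (m+3), σ i (i+1)
        = ∏ i : Fin (m+3), (if σ i (i+1) = -1 then (-1 : ℤ) else 1) :=
          Finset.prod_congr rfl (fun i _ => hsig i)
      _ = (-1) ^ (Finset.univ.filter (fun i : Fin (m+3) => σ i (i+1) = -1)).card := by
          rw [Finset.prod_ite, Finset.prod_const, Finset.prod_const, one_pow, mul_one]
      _ = -1 := Odd.neg_one_pow ho
  have : (∏ i : Fin (m+3), -σ i (i+1)) = (-1) ^ (m+3) * ∏ i : Fin (m+3), σ i (i+1) := by
    calc ∏ i : Fin (m+3), -σ i (i+1)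
        = ∏ i : Fin (m+3), ((-1) * σ i (i+1)) := by simp
      _ = (∏ _i : Fin (m+3), (-1 : ℤ)) * ∏ i : Fin (m+3), σ i (i+1) :=
          Finset.prod_mul_distrib
      _ = (-1) ^ (m+3) * ∏ i : Fin (m+3), σ i (i+1) := by
          rw [Finset.prod_const, Finset.card_univ, Fintype.card_fin]
  rw [hP1, hPS, he.neg_one_pow] at this
  norm_num at this

open SimpleGraph in
/-- An unbalanced even cycle is not 2-choosable; in particular the 4-cycle with one
negative edge admits no proper coloring from the constant lists {7, −7}. -/
theorem stmt_11 :
    (∀ (m : ℕ) (σ : Fin (m + 3) → Fin (m + 3) → ℤ),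
      Even (m + 3) →
      IsSign (cycleGraph (m + 3)) σ →
      Odd (Finset.univ.filter (fun i : Fin (m + 3) => σ i (i + 1) = -1)).card →
      ∃ L : Fin (m + 3) → Finset ℤ, (∀ v, (L v).card = 2) ∧
        ¬ ∃ c : Fin (m + 3) → ℤ,
            IsProperCol (cycleGraph (m + 3)) σ c ∧ ∀ v, c v ∈ L v) ∧
    (∀ σ : Fin 4 → Fin 4 → ℤ,
      IsSign (cycleGraph 4) σ →
      (Finset.univ.filter (fun i : Fin 4 => σ i (i + 1) = -1)).card = 1 →
      ¬ ∃ c : Fin 4 → ℤ,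
          IsProperCol (cycleGraph 4) σ c ∧ ∀ v, c v ∈ ({7, -7} : Finset ℤ)) := by
  constructor
  · intro m σ he hs ho
    exact ⟨fun _ => ({7, -7} : Finset ℤ), fun _ => by norm_num,
      key_unbalanced m σ he hs.1 hs.2 ho⟩
  · intro σ hs hcard
    exact key_unbalanced 1 σ (by decide) hs.1 hs.2 (by rw [hcard] at *; exact ⟨0, rfl⟩)
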